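/- arXiv:2509.19887 — 4 statements merged into one kernel-verified Lean document; each statement's English description precedes it below -/
import Mathlib

section
/- Let L be an n×n complex matrix, η : ℂⁿ → ℂ, θ, γ : ℂⁿ → ℝ arbitrary functions, and define a(ψ) = -iHψ - ½ L†Lψ + (-½|η(ψ)|² + iγ(ψ))ψ - e^{iθ(ψ)} η(ψ)* Lψ and b(ψ) = η(ψ)ψ + e^{iθ(ψ)} Lψ. Then for every unit vector ψ, a(ψ)ψ† + ψ a(ψ)† + b(ψ)b(ψ)† = -i[H, ψψ†] + Lψψ†L† - ½ L†L ψψ† - ½ ψψ† L†L. -/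
open Matrix Complex

/-- Outer product `ψ φ†`. -/
noncomputable def outer {n : ℕ} (v w : Fin n → ℂ) : Matrix (Fin n) (Fin n) ℂ :=
  Matrix.vecMulVec v (star w)

/-- Hermitian inner product, conjugate-linear in the first slot. -/
noncomputable def inn {n : ℕ} (v w : Fin n → ℂ) : ℂ := star v ⬝ᵥ w

/-!
With `P = ψψ†`, `K = -iH - ½L†L`, `c = -½|η|² + iγ` and `e = e^{iθ}`, the drift and noise read
`a = Kψ + cψ - e η* Lψ` and `b = ηψ + eLψ`. Expanding sesquilinearly, the terms `e η* LP` and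
`e* η PL†` of `bb†` cancel those of `aψ† + ψa†`, the multiples of `P` cancel because
`c + c* = -|η|²`, and `|e| = 1` leaves `LPL†`. What remains is `KP + PK†`, which is
`-i[H, P] - ½{L†L, P}` because `H` is Hermitian.
-/

open ComplexConjugate

section outer

variable {n : ℕ}

lemma outer_add_left (u v w : Fin n → ℂ) : outer (u + v) w = outer u w + outer v w :=
  add_vecMulVec _ _ _

lemma outer_add_right (u v w : Fin n → ℂ) : outer u (v + w) = outer u v + outer u w := by
  rw [outer, star_add, vecMulVec_add]; rfl

lemma outer_sub_left (u v w : Fin n → ℂ) : outer (u - v) w = outer u w - outer v w :=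
  sub_vecMulVec _ _ _

lemma outer_sub_right (u v w : Fin n → ℂ) : outer u (v - w) = outer u v - outer u w := by
  rw [outer, star_sub, vecMulVec_sub]; rfl

lemma outer_smul_left (c : ℂ) (v w : Fin n → ℂ) : outer (c • v) w = c • outer v w :=
  smul_vecMulVec _ _ _

lemma outer_smul_right (c : ℂ) (v w : Fin n → ℂ) : outer v (c • w) = conj c • outer v w := by
  simp only [outer, star_smul, vecMulVec_smul]; rfl

lemma outer_mulVec_left (A : Matrix (Fin n) (Fin n) ℂ) (v w : Fin n → ℂ) :
    outer (A *ᵥ v) w = A * outer v w :=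
  (mul_vecMulVec _ _ _).symm

lemma outer_mulVec_right (A : Matrix (Fin n) (Fin n) ℂ) (v w : Fin n → ℂ) :
    outer v (A *ᵥ w) = outer v w * Aᴴ := by
  rw [outer, outer, star_mulVec, vecMulVec_mul]

end outer

lemma outer_drift_add_outer_noise {n : ℕ} (K L : Matrix (Fin n) (Fin n) ℂ) (ψ : Fin n → ℂ)
    (c η e : ℂ) (hc : c + conj c = -(η * conj η)) (he : e * conj e = 1) :
    outer (K *ᵥ ψ + c • ψ - (e * conj η) • (L *ᵥ ψ)) ψ
        + outer ψ (K *ᵥ ψ + c • ψ - (e * conj η) • (L *ᵥ ψ))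
        + outer (η • ψ + e • (L *ᵥ ψ)) (η • ψ + e • (L *ᵥ ψ))
      = K * outer ψ ψ + outer ψ ψ * Kᴴ + L * outer ψ ψ * Lᴴ := by
  simp only [outer_add_left, outer_add_right, outer_sub_left, outer_sub_right,
    outer_smul_left, outer_smul_right, outer_mulVec_left, outer_mulVec_right, Matrix.add_mul,
    Matrix.smul_mul, map_mul, conj_conj, Matrix.mul_assoc]
  match_scalars <;> first | ring1 | linear_combination hc | linear_combination he

lemma neg_I_smul_sub_half_smul_mul_add_mul_conjTranspose {ι : Type*} [Fintype ι]
    {H : Matrix ι ι ℂ} (hH : H.IsHermitian) (L P : Matrix ι ι ℂ) :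
    (-I • H - (1/2 : ℂ) • (Lᴴ * L)) * P + P * (-I • H - (1/2 : ℂ) • (Lᴴ * L))ᴴ
      = -I • (H * P - P * H) - (1/2 : ℂ) • (Lᴴ * L * P) - (1/2 : ℂ) • (P * (Lᴴ * L)) := by
  simp only [conjTranspose_sub, conjTranspose_smul, conjTranspose_mul,
    conjTranspose_conjTranspose, hH.eq, star_neg, Complex.star_def, conj_I, Matrix.sub_mul,
    Matrix.mul_sub, Matrix.smul_mul, Matrix.mul_smul, map_div₀, map_one, map_ofNat]
  module

/-- For the general parametric family
`a(ψ) = -iHψ - ½L†Lψ + (-½|η(ψ)|² + iγ(ψ))ψ - e^{iθ(ψ)} η(ψ)^* Lψ`,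
`b(ψ) = η(ψ)ψ + e^{iθ(ψ)} Lψ`, the unraveling identity holds for unit vectors. -/
theorem stmt2 (n : ℕ) (H L : Matrix (Fin n) (Fin n) ℂ) (hH : H.IsHermitian)
    (η : (Fin n → ℂ) → ℂ) (θ γ : (Fin n → ℂ) → ℝ)
    (a b : (Fin n → ℂ) → (Fin n → ℂ))
    (ha : ∀ ψ, a ψ = (-Complex.I) • H.mulVec ψ - (1/2 : ℂ) • (Lᴴ * L).mulVec ψ
      + ((-(1/2 : ℂ)) * (‖η ψ‖)^2 + Complex.I * (γ ψ)) • ψ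
      - (Complex.exp (Complex.I * (θ ψ)) * (starRingEnd ℂ) (η ψ)) • L.mulVec ψ)
    (hb : ∀ ψ, b ψ = η ψ • ψ + Complex.exp (Complex.I * (θ ψ)) • L.mulVec ψ) :
    ∀ ψ : Fin n → ℂ, inn ψ ψ = 1 →
      outer (a ψ) ψ + outer ψ (a ψ) + outer (b ψ) (b ψ)
        = (-Complex.I) • (H * outer ψ ψ - outer ψ ψ * H)
          + L * outer ψ ψ * Lᴴ
          - (1/2 : ℂ) • (Lᴴ * L * outer ψ ψ)
          - (1/2 : ℂ) • (outer ψ ψ * (Lᴴ * L)) := by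
  intro ψ _
  set c : ℂ := -(1/2 : ℂ) * ‖η ψ‖ ^ 2 + I * γ ψ
  set e : ℂ := exp (I * θ ψ)
  have hc : c + conj c = -(η ψ * conj (η ψ)) := by
    simp only [c, map_add, map_mul, map_neg, map_div₀, map_one, map_ofNat, map_pow, conj_I,
      conj_ofReal, mul_conj, Complex.normSq_eq_norm_sq, ofReal_pow]
    ring
  have he : e * conj e = 1 := by
    rw [← exp_conj, ← exp_add, map_mul, conj_I, conj_ofReal, ← add_mul, add_neg_cancel,
      zero_mul, exp_zero]
  have ha' :
      a ψ = (-I • H - (1/2 : ℂ) • (Lᴴ * L)) *ᵥ ψ + c • ψ - (e * conj (η ψ)) • (L *ᵥ ψ) := by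
    rw [ha, sub_mulVec, smul_mulVec, smul_mulVec]
  rw [ha', hb, outer_drift_add_outer_noise _ _ _ _ _ _ hc he,
    neg_I_smul_sub_half_smul_mul_add_mul_conjTranspose hH]
  abel
end

section
/- Suppose ψ ∈ ℂⁿ is a unit vector that is not an eigenvector of the matrix L, and suppose A, B ∈ ℂⁿ satisfy Aψ† + ψA† + B(Lψ)† + (Lψ)B† + BB† = 0 (as n×n matrices). Then there exist β₁ ∈ ℂ and θ ∈ ℝ with Re(β₁) determined such that B = β₁ ψ + (e^{iθ} - 1)(Lψ - ⟨ψ,Lψ⟩ψ); in particular, B lies in the span of ψ and Lψ. -/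
/-!
With `ℓ = Lψ`, pairing the relation with `u` on both sides gives
`2 Re (⟪ψ, u⟫⟪u, A⟫) + 2 Re (⟪ℓ, u⟫⟪u, B⟫) + |⟪u, B⟫|² = 0`. For `u ⊥ ψ, ℓ` only the last term
survives, so `B ⊥ {ψ, ℓ}ᗮ`, i.e. `B ∈ span {ψ, ℓ}`. Write `B = β ψ + c φ` with
`φ = ℓ - ⟪ψ, ℓ⟫ ψ`, which is orthogonal to `ψ` and nonzero since `ψ` is not an eigenvector.
Taking `u = φ` leaves `‖φ‖⁴ (c + c̄ + |c|²) = 0`, i.e. `|1 + c| = 1`, so `c = e^{iθ} - 1`.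
-/

open Matrix Complex

open InnerProductSpace Submodule
open scoped ComplexConjugate

theorem exists_eq_smul_add_smul_sub_of_mem_span_pair {R M : Type*} [CommRing R] [AddCommGroup M]
    [Module R M] {x y z : M} (s : R) (hz : z ∈ span R {x, y}) :
    ∃ a b : R, z = a • x + b • (y - s • x) := by
  obtain ⟨a, b, rfl⟩ := mem_span_pair.mp hz
  exact ⟨a + b * s, b, by rw [smul_sub, smul_smul, add_smul]; abel⟩

theorem smul_add_smul_sub_mem_span_pair {R M : Type*} [CommRing R] [AddCommGroup M]
    [Module R M] (x y : M) (a b s : R) : a • x + b • (y - s • x) ∈ span R {x, y} :=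
  mem_span_pair.mpr ⟨a - b * s, b, by rw [smul_sub, smul_smul, sub_smul]; abel⟩

theorem Complex.exists_exp_mul_I_sub_one_eq {c : ℂ} (hc : c + conj c + c * conj c = 0) :
    ∃ θ : ℝ, exp (I * θ) - 1 = c := by
  have hnorm : ‖1 + c‖ = 1 := by
    have h : ((normSq (1 + c) : ℝ) : ℂ) = 1 := by
      rw [← mul_conj, map_add, map_one]; linear_combination hc
    rw [norm_def, show normSq (1 + c) = 1 by exact_mod_cast h, Real.sqrt_one]
  refine ⟨arg (1 + c), ?_⟩
  have h := norm_mul_exp_arg_mul_I (1 + c)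
  rw [hnorm, ofReal_one, one_mul, mul_comm] at h
  rw [h]; ring

section RankOneRelation

variable {E : Type*} [NormedAddCommGroup E] [InnerProductSpace ℂ E] {ψ ℓ A B : E}

theorem inner_rankOne_relation
    (hrel : rankOne ℂ A ψ + rankOne ℂ ψ A + rankOne ℂ B ℓ + rankOne ℂ ℓ B + rankOne ℂ B B = 0)
    (u : E) :
    ⟪ψ, u⟫_ℂ * ⟪u, A⟫_ℂ + ⟪A, u⟫_ℂ * ⟪u, ψ⟫_ℂ + ⟪ℓ, u⟫_ℂ * ⟪u, B⟫_ℂ + ⟪B, u⟫_ℂ * ⟪u, ℓ⟫_ℂ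
      + ⟪B, u⟫_ℂ * ⟪u, B⟫_ℂ = 0 := by
  simpa only [_root_.add_apply, rankOne_apply, inner_add_right, inner_smul_right,
    _root_.zero_apply, inner_zero_right] using congrArg (fun T ↦ ⟪u, T u⟫_ℂ) hrel

theorem inner_eq_zero_of_rankOne_relation
    (hrel : rankOne ℂ A ψ + rankOne ℂ ψ A + rankOne ℂ B ℓ + rankOne ℂ ℓ B + rankOne ℂ B B = 0)
    {u : E} (hψ : ⟪u, ψ⟫_ℂ = 0) (hℓ : ⟪u, ℓ⟫_ℂ = 0) : ⟪u, B⟫_ℂ = 0 := by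
  have h := inner_rankOne_relation hrel u
  rw [inner_eq_zero_symm.mp hψ, inner_eq_zero_symm.mp hℓ, hψ, hℓ] at h
  simp only [zero_mul, mul_zero, zero_add, mul_eq_zero] at h
  exact h.elim inner_eq_zero_symm.mp id

theorem mem_span_pair_of_rankOne_relation
    (hrel : rankOne ℂ A ψ + rankOne ℂ ψ A + rankOne ℂ B ℓ + rankOne ℂ ℓ B + rankOne ℂ B B = 0) :
    B ∈ span ℂ {ψ, ℓ} := by
  set K := span ℂ ({ψ, ℓ} : Set E)
  have : FiniteDimensional ℂ K := .span_of_finite ℂ (Set.toFinite _)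
  rw [← K.orthogonal_orthogonal, mem_orthogonal]
  intro u hu
  rw [mem_orthogonal'] at hu
  exact inner_eq_zero_of_rankOne_relation hrel (hu ψ (subset_span (by simp)))
    (hu ℓ (subset_span (by simp)))

theorem add_conj_add_mul_conj_eq_zero_of_rankOne_relation
    (hrel : rankOne ℂ A ψ + rankOne ℂ ψ A + rankOne ℂ B ℓ + rankOne ℂ ℓ B + rankOne ℂ B B = 0)
    {φ : E} {s β c : ℂ} (hψφ : ⟪ψ, φ⟫_ℂ = 0) (hφ : φ ≠ 0) (hℓ : ℓ = s • ψ + φ)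
    (hB : B = β • ψ + c • φ) : c + conj c + c * conj c = 0 := by
  have hφψ : ⟪φ, ψ⟫_ℂ = 0 := inner_eq_zero_symm.mp hψφ
  set r := ⟪φ, φ⟫_ℂ
  have hr : r ≠ 0 := inner_self_ne_zero.mpr hφ
  have h := inner_rankOne_relation hrel φ
  simp only [hℓ, hB, inner_add_left, inner_add_right, inner_smul_left, inner_smul_right,
    hψφ, hφψ] at h
  have h' : r * r * (c + conj c + c * conj c) = 0 := by linear_combination h
  simpa [hr] using h'

theorem exists_eq_smul_add_exp_smul_of_rankOne_relation (hψ : ⟪ψ, ψ⟫_ℂ = 1)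
    (hℓ : ∀ c : ℂ, ℓ ≠ c • ψ)
    (hrel : rankOne ℂ A ψ + rankOne ℂ ψ A + rankOne ℂ B ℓ + rankOne ℂ ℓ B + rankOne ℂ B B = 0) :
    ∃ (β : ℂ) (θ : ℝ), B = β • ψ + (exp (I * θ) - 1) • (ℓ - ⟪ψ, ℓ⟫_ℂ • ψ) := by
  set φ := ℓ - ⟪ψ, ℓ⟫_ℂ • ψ
  have hψφ : ⟪ψ, φ⟫_ℂ = 0 := by
    rw [inner_sub_right, inner_smul_right, hψ, mul_one, sub_self]
  have hφ : φ ≠ 0 := sub_ne_zero.mpr (hℓ _)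
  obtain ⟨β, c, hB⟩ :=
    exists_eq_smul_add_smul_sub_of_mem_span_pair _ (mem_span_pair_of_rankOne_relation hrel)
  obtain ⟨θ, hθ⟩ := exists_exp_mul_I_sub_one_eq
    (add_conj_add_mul_conj_eq_zero_of_rankOne_relation hrel hψφ hφ (add_sub_cancel _ _).symm hB)
  exact ⟨β, θ, by rw [hθ, hB]⟩

end RankOneRelation

theorem inn_eq_inner {n : ℕ} (u v : Fin n → ℂ) :
    inn u v = ⟪WithLp.toLp 2 u, WithLp.toLp 2 v⟫_ℂ := by
  rw [EuclideanSpace.inner_toLp_toLp, dotProduct_comm]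
  rfl

theorem outer_eq_toEuclideanLin_symm_rankOne {n : ℕ} (a b : Fin n → ℂ) :
    outer a b = toEuclideanLin.symm (rankOne ℂ (WithLp.toLp 2 a) (WithLp.toLp 2 b)) := by
  rw [symm_toEuclideanLin_rankOne]
  rfl

/-- If `ψ` is a unit vector which is not an eigenvector of `L` and
`Aψ† + ψA† + B(Lψ)† + (Lψ)B† + BB† = 0`, then
`B = β₁ ψ + (e^{iθ} - 1)(Lψ - ⟨ψ,Lψ⟩ψ)` for some `β₁ ∈ ℂ`, `θ ∈ ℝ`;
in particular `B ∈ span{ψ, Lψ}`. -/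
theorem stmt4 (n : ℕ) (L : Matrix (Fin n) (Fin n) ℂ) (ψ A B : Fin n → ℂ)
    (hψ : inn ψ ψ = 1) (heig : ∀ c : ℂ, L.mulVec ψ ≠ c • ψ)
    (hrel : outer A ψ + outer ψ A + outer B (L.mulVec ψ) + outer (L.mulVec ψ) B
      + outer B B = 0) :
    (∃ (β₁ : ℂ) (θ : ℝ),
        B = β₁ • ψ + (Complex.exp (Complex.I * θ) - 1)
          • (L.mulVec ψ - inn ψ (L.mulVec ψ) • ψ)) ∧
      B ∈ Submodule.span ℂ ({ψ, L.mulVec ψ} : Set (Fin n → ℂ)) := by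
  simp only [outer_eq_toEuclideanLin_symm_rankOne, ← map_add, LinearEquiv.map_eq_zero_iff,
    ← ContinuousLinearMap.toLinearMap_add, ← ContinuousLinearMap.toLinearMap_zero,
    ContinuousLinearMap.coe_inj] at hrel
  have hℓ : ∀ c : ℂ, WithLp.toLp 2 (L.mulVec ψ) ≠ c • WithLp.toLp 2 ψ := fun c h ↦
    heig c (by simpa using congrArg WithLp.ofLp h)
  obtain ⟨β, θ, h⟩ :=
    exists_eq_smul_add_exp_smul_of_rankOne_relation (by rwa [← inn_eq_inner]) hℓ hrel
  have hB : B = β • ψ + (exp (I * θ) - 1) • (L.mulVec ψ - inn ψ (L.mulVec ψ) • ψ) := by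
    simpa [inn_eq_inner] using congrArg WithLp.ofLp h
  exact ⟨⟨β, θ, hB⟩, hB ▸ smul_add_smul_sub_mem_span_pair _ _ _ _ _⟩
end

section
/- Suppose ψ is a unit vector, Lψ ∉ span{ψ}, and A, B ∈ ℂⁿ satisfy Aψ† + ψA† + B(Lψ)† + (Lψ)B† + BB† = 0. Write φ₂ = Lψ - ⟨ψ,Lψ⟩ψ and decompose B = β₁ψ + β₂φ₂ + B_R with B_R orthogonal to span{ψ, Lψ}. Then B_R = 0 and |β₂ + 1| = 1, i.e., B = β₁ψ + β₂φ₂ with |β₂ + 1| = 1. -/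
open Matrix Complex

lemma inn_outer_mulVec {n : ℕ} (x v w y : Fin n → ℂ) :
    inn x ((outer v w).mulVec y) = inn x v * inn w y := by
  simp only [inn, outer, Matrix.mulVec, Matrix.vecMulVec, dotProduct,
    Matrix.of_apply, Pi.star_apply, Finset.mul_sum, Finset.sum_mul]
  rw [Finset.sum_comm]
  apply Finset.sum_congr rfl; intro j _
  apply Finset.sum_congr rfl; intro i _
  ring

lemma inn_conj {n : ℕ} (x y : Fin n → ℂ) : inn x y = starRingEnd ℂ (inn y x) := by
  simp only [inn, dotProduct]
  rw [map_sum]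
  apply Finset.sum_congr rfl; intro i _
  simp [mul_comm]

lemma inn_add_right {n : ℕ} (x y z : Fin n → ℂ) : inn x (y + z) = inn x y + inn x z := by
  simp [inn, dotProduct_add]

lemma inn_sub_right {n : ℕ} (x y z : Fin n → ℂ) : inn x (y - z) = inn x y - inn x z := by
  simp [inn, dotProduct_sub]

lemma inn_smul_right {n : ℕ} (a : ℂ) (x y : Fin n → ℂ) : inn x (a • y) = a * inn x y := by
  simp [inn, dotProduct_smul, smul_eq_mul]

lemma inn_add_left {n : ℕ} (x y z : Fin n → ℂ) : inn (x + y) z = inn x z + inn y z := by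
  simp [inn, add_dotProduct]

lemma inn_sub_left {n : ℕ} (x y z : Fin n → ℂ) : inn (x - y) z = inn x z - inn y z := by
  simp [inn, sub_dotProduct]

lemma inn_smul_left {n : ℕ} (a : ℂ) (x y : Fin n → ℂ) :
    inn (a • x) y = starRingEnd ℂ a * inn x y := by
  simp [inn, smul_dotProduct, smul_eq_mul, star_smul]

lemma inn_zero_right {n : ℕ} (x : Fin n → ℂ) : inn x (0 : Fin n → ℂ) = 0 := by
  simp [inn]

lemma inn_self_eq_zero {n : ℕ} {x : Fin n → ℂ} (h : inn x x = 0) : x = 0 := by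
  have hsum : ∑ i, Complex.normSq (x i) = 0 := by
    have h' : inn x x = ((∑ i, Complex.normSq (x i) : ℝ) : ℂ) := by
      simp only [inn, dotProduct, Pi.star_apply, Complex.ofReal_sum]
      exact Finset.sum_congr rfl fun i _ => (Complex.normSq_eq_conj_mul_self).symm ▸ rfl
    rw [h] at h'
    exact_mod_cast h'.symm
  funext i
  have := (Finset.sum_eq_zero_iff_of_nonneg (fun i _ => Complex.normSq_nonneg (x i))).mp
    hsum i (Finset.mem_univ i)
  exact Complex.normSq_eq_zero.mp this

/-- If `ψ` is a unit vector, `Lψ ∉ span{ψ}`, and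
`Aψ† + ψA† + B(Lψ)† + (Lψ)B† + BB† = 0`, then writing `φ₂ = Lψ - ⟨ψ,Lψ⟩ψ`, the
component of `B` orthogonal to `span{ψ, Lψ}` vanishes, i.e. `B = β₁ψ + β₂φ₂`
with `|β₂ + 1| = 1`. -/
theorem stmt5 (n : ℕ) (L : Matrix (Fin n) (Fin n) ℂ) (ψ A B : Fin n → ℂ)
    (hψ : inn ψ ψ = 1)
    (heig : L.mulVec ψ ∉ Submodule.span ℂ ({ψ} : Set (Fin n → ℂ)))
    (hrel : outer A ψ + outer ψ A + outer B (L.mulVec ψ) + outer (L.mulVec ψ) B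
      + outer B B = 0) :
    ∃ (β₁ β₂ : ℂ),
      B = β₁ • ψ + β₂ • (L.mulVec ψ - inn ψ (L.mulVec ψ) • ψ) ∧
        ‖β₂ + 1‖ = 1 := by
  set Lψ := L.mulVec ψ with hLψ
  set a := inn ψ Lψ with ha
  set φ := Lψ - a • ψ with hφ
  have key : ∀ x y : Fin n → ℂ,
      inn x A * inn ψ y + inn x ψ * inn A y + inn x B * inn Lψ y
        + inn x Lψ * inn B y + inn x B * inn B y = 0 := by
    intro x y
    have h := congrArg (fun M : Matrix (Fin n) (Fin n) ℂ => inn x (M.mulVec y)) hrel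
    simpa only [Matrix.add_mulVec, inn_add_right, inn_outer_mulVec, Matrix.zero_mulVec,
      inn_zero_right] using h
  have hψφ : inn ψ φ = 0 := by
    rw [hφ, inn_sub_right, inn_smul_right, hψ, ← ha]; ring
  have hφψ : inn φ ψ = 0 := by
    rw [inn_conj, hψφ, map_zero]
  set c := inn φ φ with hc
  have hcconj : starRingEnd ℂ c = c := by rw [hc, ← inn_conj]
  have hcne : c ≠ 0 := by
    intro h0
    apply heig
    have : φ = 0 := inn_self_eq_zero h0
    have hLa : L.mulVec ψ = a • ψ := by
      have := sub_eq_zero.mp this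
      simpa using this
    rw [hLψ, hLa]
    exact Submodule.smul_mem _ a (Submodule.mem_span_singleton_self ψ)
  -- inn of Lψ in terms of φ and ψ
  have hLdecomp : Lψ = φ + a • ψ := by rw [hφ]; abel
  set β₁ := inn ψ B with hβ₁
  set β₂ := inn φ B / c with hβ₂
  set R := B - β₁ • ψ - β₂ • φ with hR
  have hψR : inn ψ R = 0 := by
    rw [hR, inn_sub_right, inn_sub_right, inn_smul_right, inn_smul_right, hψ, hψφ, ← hβ₁]; ring
  have hφR : inn φ R = 0 := by
    rw [hR, inn_sub_right, inn_sub_right, inn_smul_right, inn_smul_right, hφψ, ← hc, hβ₂]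
    field_simp; ring
  have hLR : inn Lψ R = 0 := by
    rw [hLdecomp, inn_add_left, inn_smul_left, hψR, hφR]; ring
  have hRψ : inn R ψ = 0 := by rw [inn_conj, hψR, map_zero]
  have hRφ : inn R φ = 0 := by rw [inn_conj, hφR, map_zero]
  have hRL : inn R Lψ = 0 := by rw [inn_conj, hLR, map_zero]
  have hBdecomp : B = R + β₁ • ψ + β₂ • φ := by rw [hR]; abel
  have hBR : inn B R = inn R R := by
    conv_lhs => rw [hBdecomp]
    rw [inn_add_left, inn_add_left, inn_smul_left, inn_smul_left, hψR, hφR]; ring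
  have hRB : inn R B = inn R R := by
    rw [inn_conj, hBR, ← inn_conj]
  have hRzero : R = 0 := by
    apply inn_self_eq_zero
    have h := key R R
    rw [hψR, hRψ, hLR, hRL, hBR, hRB] at h
    have : inn R R * inn R R = 0 := by linear_combination h
    exact mul_self_eq_zero.mp this
  have hB : B = β₁ • ψ + β₂ • φ := by
    rw [hBdecomp, hRzero]; abel
  refine ⟨β₁, β₂, by rw [hB, hφ], ?_⟩
  -- compute the constraint on β₂
  have hφB : inn φ B = β₂ * c := by
    rw [hB, inn_add_right, inn_smul_right, inn_smul_right, hφψ, ← hc]; ring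
  have hBφ : inn B φ = starRingEnd ℂ β₂ * c := by
    rw [inn_conj, hφB, RingHom.map_mul, hcconj]
  have hLφ : inn Lψ φ = c := by
    rw [hLdecomp, inn_add_left, inn_smul_left, hψφ, ← hc]; ring
  have hφL : inn φ Lψ = c := by
    rw [inn_conj, hLφ, hcconj]
  have h := key φ φ
  rw [hψφ, hφψ, hφB, hBφ, hLφ, hφL] at h
  have hcsq : c * c ≠ 0 := mul_ne_zero hcne hcne
  have hβ : β₂ + starRingEnd ℂ β₂ + β₂ * starRingEnd ℂ β₂ = 0 := by
    have : (β₂ + starRingEnd ℂ β₂ + β₂ * starRingEnd ℂ β₂) * (c * c) = 0 := by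
      linear_combination h
    exact (mul_eq_zero.mp this).resolve_right hcsq
  have hnorm : (β₂ + 1) * starRingEnd ℂ (β₂ + 1) = 1 := by
    have h1 : starRingEnd ℂ (β₂ + 1) = starRingEnd ℂ β₂ + 1 := by simp
    rw [h1]; linear_combination hβ
  have habs : (‖β₂ + 1‖ : ℝ) ^ 2 = 1 := by
    have h2c : ((Complex.normSq (β₂ + 1) : ℝ) : ℂ) = 1 := by
      rw [← Complex.mul_conj, hnorm]
    have h2 : Complex.normSq (β₂ + 1) = 1 := by exact_mod_cast h2c
    rw [Complex.sq_norm, h2]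
  nlinarith [norm_nonneg (β₂ + 1), habs]
end

section
/- Let O₁,…,O_m be Hermitian matrices, L a matrix, ψ a unit vector, and for each j write ⟨O_jψ, Lψ⟩ - ⟨ψ,Lψ⟩⟨ψ,O_jψ⟩ = R_j e^{iP_j} with R_j ≥ 0. Then min over θ ∈ ℝ of Σ_j |Re(e^{iθ}(⟨O_jψ,Lψ⟩ - ⟨ψ,Lψ⟩⟨ψ,O_jψ⟩))|² equals ½ Σ_j R_j² - ½ |Σ_j R_j² e^{2iP_j}|, attained when e^{2iθ} Σ_j R_j² e^{2iP_j} = -|Σ_j R_j² e^{2iP_j}|. -/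
open Matrix Complex BigOperators

/-!
Writing `w = e^{iθ} z`, one has `(Re w)² = (|w|² + Re w²) / 2` and `w² = e^{2iθ} z²`, so
`Σ_j (Re e^{iθ} z_j)² = ½ Σ_j |z_j|² + ½ Re (e^{2iθ} Σ_j z_j²)`. As `e^{2iθ}` is a unit,
the last real part is at least `-|Σ_j z_j²|`, with equality when
`e^{2iθ} Σ_j z_j² = -|Σ_j z_j²|`. For `z_j = R_j e^{iP_j}` one has `|z_j|² = R_j²` and
`z_j² = R_j² e^{2iP_j}`.
-/

namespace Complex

lemma re_sq_eq_half_norm_sq_add_re_sq (w : ℂ) : w.re ^ 2 = (‖w‖ ^ 2 + (w ^ 2).re) / 2 := by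
  rw [Complex.sq_norm, normSq_apply, pow_two, pow_two, mul_re]
  ring

lemma exp_two_mul_I_mul_ofReal (θ : ℝ) : exp (2 * I * θ) = exp (I * θ) ^ 2 := by
  rw [← exp_nat_mul]
  ring_nf

lemma sum_re_exp_I_mul_sq {ι : Type*} (s : Finset ι) (z : ι → ℂ) (θ : ℝ) :
    ∑ j ∈ s, (exp (I * θ) * z j).re ^ 2
      = (∑ j ∈ s, ‖z j‖ ^ 2 + (exp (2 * I * θ) * ∑ j ∈ s, z j ^ 2).re) / 2 := by
  simp only [re_sq_eq_half_norm_sq_add_re_sq, norm_mul, norm_exp_I_mul_ofReal, one_mul,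
    exp_two_mul_I_mul_ofReal, mul_pow, Finset.mul_sum, re_sum, ← Finset.sum_div,
    Finset.sum_add_distrib]

lemma neg_norm_le_re_exp_mul (θ : ℝ) (S : ℂ) : -‖S‖ ≤ (exp (2 * I * θ) * S).re := by
  have hunit : ‖exp (2 * I * θ) * S‖ = ‖S‖ := by
    rw [norm_mul, exp_two_mul_I_mul_ofReal, norm_pow, norm_exp_I_mul_ofReal, one_pow, one_mul]
  exact hunit ▸ neg_le_of_abs_le (abs_re_le_norm _)

lemma norm_ofReal_mul_exp_I_mul_sq (r p : ℝ) : ‖(r : ℂ) * exp (I * p)‖ ^ 2 = r ^ 2 := by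
  rw [norm_mul, norm_exp_I_mul_ofReal, mul_one, norm_real, Real.norm_eq_abs, sq_abs]

lemma ofReal_mul_exp_I_mul_sq (r p : ℝ) :
    ((r : ℂ) * exp (I * p)) ^ 2 = (r : ℂ) ^ 2 * exp (2 * I * p) := by
  rw [mul_pow, exp_two_mul_I_mul_ofReal]

end Complex

theorem stmt19_general (n m : ℕ) (O : Fin m → Matrix (Fin n) (Fin n) ℂ)
    (L : Matrix (Fin n) (Fin n) ℂ)
    (ψ : Fin n → ℂ) (R P : Fin m → ℝ)
    (hz : ∀ j, inn ((O j).mulVec ψ) (L.mulVec ψ)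
        - inn ψ (L.mulVec ψ) * inn ψ ((O j).mulVec ψ)
      = (R j : ℂ) * Complex.exp (Complex.I * (P j))) :
    (∀ θ : ℝ,
        (1/2) * ∑ j, (R j) ^ 2
          - (1/2) * ‖(∑ j, ((R j : ℂ) ^ 2
              * Complex.exp (2 * Complex.I * (P j))))‖
        ≤ ∑ j, |(Complex.exp (Complex.I * θ)
            * (inn ((O j).mulVec ψ) (L.mulVec ψ)
              - inn ψ (L.mulVec ψ) * inn ψ ((O j).mulVec ψ))).re| ^ 2) ∧
      (∀ θ : ℝ,
        Complex.exp (2 * Complex.I * θ)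
            * ∑ j, ((R j : ℂ) ^ 2 * Complex.exp (2 * Complex.I * (P j)))
          = -((‖(∑ j, ((R j : ℂ) ^ 2
              * Complex.exp (2 * Complex.I * (P j))))‖ : ℝ) : ℂ) →
        ∑ j, |(Complex.exp (Complex.I * θ)
            * (inn ((O j).mulVec ψ) (L.mulVec ψ)
              - inn ψ (L.mulVec ψ) * inn ψ ((O j).mulVec ψ))).re| ^ 2
          = (1/2) * ∑ j, (R j) ^ 2
            - (1/2) * ‖(∑ j, ((R j : ℂ) ^ 2
                * Complex.exp (2 * Complex.I * (P j))))‖) := by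
  set S : ℂ := ∑ j, (R j : ℂ) ^ 2 * exp (2 * I * P j)
  have hsum (θ : ℝ) : ∑ j, |(exp (I * θ) * ((R j : ℂ) * exp (I * P j))).re| ^ 2
      = (∑ j, R j ^ 2 + (exp (2 * I * θ) * S).re) / 2 := by
    simp only [sq_abs, sum_re_exp_I_mul_sq, norm_ofReal_mul_exp_I_mul_sq,
      ofReal_mul_exp_I_mul_sq, S]
  simp only [hz, hsum]
  refine ⟨fun θ => ?_, fun θ hθ => ?_⟩
  · linarith [neg_norm_le_re_exp_mul θ S]
  · rw [hθ, neg_re, ofReal_re]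
    ring

/-- Multi-observable DO-QSD optimal phase: with
`z_j = ⟨O_jψ,Lψ⟩ - ⟨ψ,Lψ⟩⟨ψ,O_jψ⟩ = R_j e^{iP_j}` (`R_j ≥ 0`), the minimum over
`θ ∈ ℝ` of `Σ_j |Re(e^{iθ} z_j)|²` equals
`½ Σ_j R_j² - ½ |Σ_j R_j² e^{2iP_j}|`, attained exactly when
`e^{2iθ} Σ_j R_j² e^{2iP_j} = -|Σ_j R_j² e^{2iP_j}|`. -/
theorem stmt19 (n m : ℕ) (O : Fin m → Matrix (Fin n) (Fin n) ℂ)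
    (hO : ∀ j, (O j).IsHermitian) (L : Matrix (Fin n) (Fin n) ℂ)
    (ψ : Fin n → ℂ) (hψ : inn ψ ψ = 1) (R P : Fin m → ℝ) (hR : ∀ j, 0 ≤ R j)
    (hz : ∀ j, inn ((O j).mulVec ψ) (L.mulVec ψ)
        - inn ψ (L.mulVec ψ) * inn ψ ((O j).mulVec ψ)
      = (R j : ℂ) * Complex.exp (Complex.I * (P j))) :
    (∀ θ : ℝ,
        (1/2) * ∑ j, (R j) ^ 2
          - (1/2) * ‖(∑ j, ((R j : ℂ) ^ 2
              * Complex.exp (2 * Complex.I * (P j))))‖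
        ≤ ∑ j, |(Complex.exp (Complex.I * θ)
            * (inn ((O j).mulVec ψ) (L.mulVec ψ)
              - inn ψ (L.mulVec ψ) * inn ψ ((O j).mulVec ψ))).re| ^ 2) ∧
      (∀ θ : ℝ,
        Complex.exp (2 * Complex.I * θ)
            * ∑ j, ((R j : ℂ) ^ 2 * Complex.exp (2 * Complex.I * (P j)))
          = -((‖(∑ j, ((R j : ℂ) ^ 2
              * Complex.exp (2 * Complex.I * (P j))))‖ : ℝ) : ℂ) →
        ∑ j, |(Complex.exp (Complex.I * θ)
            * (inn ((O j).mulVec ψ) (L.mulVec ψ)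
              - inn ψ (L.mulVec ψ) * inn ψ ((O j).mulVec ψ))).re| ^ 2
          = (1/2) * ∑ j, (R j) ^ 2
            - (1/2) * ‖(∑ j, ((R j : ℂ) ^ 2
                * Complex.exp (2 * Complex.I * (P j))))‖) :=
  stmt19_general n m O L ψ R P hz
end
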